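/- arXiv:1706.10003 — 2 statements merged into one kernel-verified Lean document; each statement's English description precedes it below -/
import Mathlib

section
/- Let p be a probability density on ℝ^d that is L-Lipschitz: |p(x) − p(y)| ≤ L·‖x − y‖ for all x, y. Then sup_x p(x) ≤ ((d+1)/v_d)^{1/(d+1)} · L^{d/(d+1)}, where v_d is the volume of the d-dimensional Euclidean unit ball. -/
/-!
The Lipschitz bound puts `p` above the cone `y ↦ max (p x - L ‖y - x‖) 0`, whose integral is
`v_d p(x)^(d+1) / ((d + 1) L^d)` by the layer cake formula; comparing with `∫ p = 1` gives the bound.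
-/

open MeasureTheory Metric Set Module

theorem integral_sub_div_pow {M L : ℝ} (hL : L ≠ 0) (d : ℕ) :
    ∫ t in (0 : ℝ)..M, ((M - t) / L) ^ d = M ^ (d + 1) / ((d + 1) * L ^ d) := by
  simp_rw [div_pow]
  rw [intervalIntegral.integral_div, intervalIntegral.integral_comp_sub_left (fun t => t ^ d),
    integral_pow]
  field_simp
  simp

section Cone

variable {X : Type*} [PseudoMetricSpace X]

theorem setOf_le_cone {x : X} {M L t : ℝ} (hL : 0 < L) (ht : 0 < t) :
    {y | t ≤ max (M - L * dist y x) 0} = closedBall x ((M - t) / L) := by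
  ext y
  rw [mem_ofPred_eq, mem_closedBall, le_div_iff₀ hL, le_max_iff, or_iff_left (not_le.2 ht)]
  constructor <;> intro h <;> linarith

theorem hasCompactSupport_cone [ProperSpace X] (x : X) {M L : ℝ} (hL : 0 < L) :
    HasCompactSupport fun y => max (M - L * dist y x) 0 := by
  refine HasCompactSupport.intro (isCompact_closedBall x (M / L)) fun y hy => max_eq_right ?_
  rw [mem_closedBall, not_le, div_lt_iff₀ hL] at hy
  linarith

theorem cone_le_of_abs_sub_le {p : X → ℝ} {L : ℝ} (hp : ∀ y, 0 ≤ p y)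
    (hlip : ∀ x y, |p x - p y| ≤ L * dist x y) (x y : X) :
    max (p x - L * dist y x) 0 ≤ p y := by
  refine max_le ?_ (hp y)
  rw [dist_comm]
  linarith [(abs_le.1 (hlip x y)).2]

end Cone

section AddHaar

variable {E : Type*} [NormedAddCommGroup E] [NormedSpace ℝ E] [FiniteDimensional ℝ E]
  [MeasurableSpace E] [BorelSpace E] (μ : Measure E) [μ.IsAddHaarMeasure]

theorem integral_cone (x : E) {M L : ℝ} (hM : 0 ≤ M) (hL : 0 < L) :
    ∫ y, max (M - L * dist y x) 0 ∂μ
      = μ.real (closedBall 0 1) * M ^ (finrank ℝ E + 1) / ((finrank ℝ E + 1) * L ^ finrank ℝ E) := by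
  have hint : Integrable (fun y => max (M - L * dist y x) 0) μ :=
    (by fun_prop : Continuous _).integrable_of_hasCompactSupport (hasCompactSupport_cone x hL)
  have hle : ∀ y, max (M - L * dist y x) 0 ≤ M := fun y =>
    max_le (sub_le_self M (by positivity)) hM
  rw [hint.integral_eq_integral_Ioc_meas_le (.of_forall fun y => le_max_right _ _)
    (.of_forall hle)]
  calc ∫ t in Ioc 0 M, μ.real {y | t ≤ max (M - L * dist y x) 0}
      = ∫ t in Ioc 0 M, ((M - t) / L) ^ finrank ℝ E * μ.real (closedBall 0 1) := by
        refine setIntegral_congr_fun measurableSet_Ioc fun t ht => ?_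
        rw [setOf_le_cone hL ht.1,
          Measure.addHaar_real_closedBall' μ x (div_nonneg (sub_nonneg.2 ht.2) hL.le)]
    _ = _ := by
        rw [integral_mul_const, ← intervalIntegral.integral_of_le hM,
          integral_sub_div_pow hL.ne']
        ring

variable {μ} {p : E → ℝ} {L : ℝ}

theorem measureReal_closedBall_mul_pow_le_integral (hL : 0 < L) (hp : ∀ y, 0 ≤ p y)
    (hpi : Integrable p μ) (hlip : ∀ x y, |p x - p y| ≤ L * dist x y) (x : E) :
    μ.real (closedBall 0 1) * p x ^ (finrank ℝ E + 1)
      ≤ (finrank ℝ E + 1) * L ^ finrank ℝ E * ∫ y, p y ∂μ := by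
  have hcone := integral_mono
    ((by fun_prop : Continuous _).integrable_of_hasCompactSupport (hasCompactSupport_cone x hL))
    hpi (cone_le_of_abs_sub_le hp hlip x)
  rw [integral_cone μ x (hp x) hL, div_le_iff₀ (by positivity)] at hcone
  linarith

theorem le_of_lipschitz_of_integral_eq_one_of_pos (hL : 0 < L) (hp : ∀ y, 0 ≤ p y)
    (hpi : ∫ y, p y ∂μ = 1) (hlip : ∀ x y, |p x - p y| ≤ L * dist x y) (x : E) :
    p x ≤ ((finrank ℝ E + 1) / μ.real (closedBall 0 1)) ^ (1 / ((finrank ℝ E : ℝ) + 1))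
      * L ^ ((finrank ℝ E : ℝ) / (finrank ℝ E + 1)) := by
  have hv : 0 < μ.real (closedBall 0 1) :=
    ENNReal.toReal_pos (measure_closedBall_pos μ 0 one_pos).ne' measure_closedBall_lt_top.ne
  have hbound := measureReal_closedBall_mul_pow_le_integral hL hp
    (Integrable.of_integral_ne_zero (μ := μ) (by simp [hpi])) hlip x
  rw [hpi, mul_one, mul_comm, ← le_div_iff₀ hv, mul_div_right_comm] at hbound
  calc p x ≤ ((finrank ℝ E + 1) / μ.real (closedBall 0 1) * L ^ finrank ℝ E)
        ^ ((finrank ℝ E : ℝ) + 1)⁻¹ := by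
        rw [Real.le_rpow_inv_iff_of_pos (hp x) (by positivity) (by positivity)]
        exact_mod_cast hbound
    _ = _ := by
        rw [Real.mul_rpow (by positivity) (by positivity), ← Real.rpow_natCast L,
          ← Real.rpow_mul hL.le, one_div, ← div_eq_mul_inv]

/-- An `L`-Lipschitz function is `ε`-Lipschitz for every `ε > L`; let `ε` decrease to `L`. -/
theorem le_of_lipschitz_of_integral_eq_one (hL : 0 ≤ L) (hp : ∀ y, 0 ≤ p y)
    (hpi : ∫ y, p y ∂μ = 1) (hlip : ∀ x y, |p x - p y| ≤ L * dist x y) (x : E) :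
    p x ≤ ((finrank ℝ E + 1) / μ.real (closedBall 0 1)) ^ (1 / ((finrank ℝ E : ℝ) + 1))
      * L ^ ((finrank ℝ E : ℝ) / (finrank ℝ E + 1)) := by
  have hcont : Continuous fun ε : ℝ => ((finrank ℝ E + 1) / μ.real (closedBall 0 1))
      ^ (1 / ((finrank ℝ E : ℝ) + 1)) * ε ^ ((finrank ℝ E : ℝ) / (finrank ℝ E + 1)) :=
    continuous_const.mul (Real.continuous_rpow_const (by positivity))
  refine ge_of_tendsto (hcont.continuousWithinAt (s := Ioi L)) ?_
  filter_upwards [self_mem_nhdsWithin] with ε (hε : L < ε)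
  exact le_of_lipschitz_of_integral_eq_one_of_pos (hL.trans_lt hε) hp hpi
    (fun x y => (hlip x y).trans (by gcongr)) x

end AddHaar

/-- An `L`-Lipschitz probability density on `ℝ^d` is uniformly bounded by
`((d+1)/v_d)^(1/(d+1)) · L^(d/(d+1))`, where `v_d` is the volume of the unit ball. -/
theorem lipschitz_density_sup_bound
    (d : ℕ) (p : EuclideanSpace ℝ (Fin d) → ℝ) (L : ℝ) (hL : 0 ≤ L)
    (hnonneg : ∀ x, 0 ≤ p x)
    (hint : ∫ x, p x = 1)
    (hlip : ∀ x y, |p x - p y| ≤ L * ‖x - y‖)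
    (vd : ℝ) (hvd : vd = (volume (Metric.closedBall (0 : EuclideanSpace ℝ (Fin d)) 1)).toReal) :
    ∀ x, p x ≤ (((d : ℝ) + 1) / vd) ^ ((1 : ℝ) / ((d : ℝ) + 1)) * L ^ ((d : ℝ) / ((d : ℝ) + 1)) := by
  intro x
  have h := le_of_lipschitz_of_integral_eq_one (μ := volume) hL hnonneg hint
    (by simpa only [dist_eq_norm] using hlip) x
  rwa [finrank_euclideanSpace_fin, measureReal_def, ← hvd] at h
end

section
/- Let p₀ be the Cauchy density with scale parameter α > 0 and let 0 < σ ≤ 1/2. Set b = 2α/(πσ). Then (∫_{−b}^{b} √(p₀(x)) dx)² ≤ (4α/π) · (ln(2e/(πσ)))². -/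
/-!
Up to the factor `√(α / π)`, `√p₀` is `(x² + α²)^(-1/2)`, whose antiderivative is `arsinh (x / α)`;
so the left-hand side is `(4α/π) · arsinh (b / α)²` with `b / α = 2 / (πσ) ≥ 1`. For `t ≥ 1`,
`arsinh t = log (t + √(1 + t²)) ≤ log (t + √2 t) ≤ log (e t)` because `1 + √2 < e`.
-/

open Real MeasureTheory

lemma sqrt_cauchy_density {α : ℝ} (hα : 0 < α) (x : ℝ) :
    √((1 / (π * α)) * (α ^ 2 / (x ^ 2 + α ^ 2))) = √(α / π) * (√(x ^ 2 + α ^ 2))⁻¹ := by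
  rw [show (1 / (π * α)) * (α ^ 2 / (x ^ 2 + α ^ 2)) = (α / π) * (x ^ 2 + α ^ 2)⁻¹ by
      field_simp, sqrt_mul (by positivity), sqrt_inv]

lemma hasDerivAt_arsinh_div {α : ℝ} (hα : 0 < α) (x : ℝ) :
    HasDerivAt (fun y => arsinh (y / α)) (√(x ^ 2 + α ^ 2))⁻¹ x := by
  have hsqrt : √(1 + (x / α) ^ 2) = √(x ^ 2 + α ^ 2) / α := by
    rw [show 1 + (x / α) ^ 2 = (x ^ 2 + α ^ 2) / α ^ 2 by field_simp; ring,
      sqrt_div (by positivity), sqrt_sq hα.le]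
  convert ((hasDerivAt_id' x).div_const α).arsinh using 1
  rw [hsqrt, inv_div, smul_eq_mul]
  field_simp

lemma integral_inv_sqrt_sq_add_sq {α : ℝ} (hα : 0 < α) (a b : ℝ) :
    ∫ x in a..b, (√(x ^ 2 + α ^ 2))⁻¹ = arsinh (b / α) - arsinh (a / α) := by
  have hcont : Continuous fun x : ℝ => (√(x ^ 2 + α ^ 2))⁻¹ :=
    (continuous_sqrt.comp (by fun_prop)).inv₀ fun x => (sqrt_pos.2 (by positivity)).ne'
  exact intervalIntegral.integral_eq_sub_of_hasDerivAt (fun x _ => hasDerivAt_arsinh_div hα x)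
    (hcont.intervalIntegrable a b)

lemma arsinh_le_log_exp_one_mul {t : ℝ} (ht : 1 ≤ t) : arsinh t ≤ log (exp 1 * t) := by
  have he : 2.7 < exp 1 := lt_trans (by norm_num) exp_one_gt_d9
  have hsqrt : √(1 + t ^ 2) ≤ (exp 1 - 1) * t := by
    have he1 : 1 + 1 ≤ (exp 1 - 1) ^ 2 := by nlinarith
    rw [sqrt_le_left (by nlinarith), mul_pow]
    nlinarith [mul_le_mul_of_nonneg_right he1 (sq_nonneg t), one_le_pow₀ (n := 2) ht]
  exact log_le_log (by positivity) (by linarith)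

/-- Upper bound on the truncated T-functional of the Cauchy density. -/
theorem cauchy_truncated_T_bound (α σ : ℝ) (hα : 0 < α) (hσ : 0 < σ) (hσ2 : σ ≤ 1 / 2)
    (p₀ : ℝ → ℝ)
    (hp₀ : ∀ x, p₀ x = (1 / (π * α)) * (α ^ 2 / (x ^ 2 + α ^ 2)))
    (b : ℝ) (hb : b = 2 * α / (π * σ)) :
    (∫ x in (-b)..b, Real.sqrt (p₀ x)) ^ 2
      ≤ (4 * α / π) * (Real.log (2 * Real.exp 1 / (π * σ))) ^ 2 := by
  set t := 2 / (π * σ) with ht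
  have hbt : b / α = t := by rw [hb, ht]; field_simp
  have ht1 : 1 ≤ t := by
    rw [ht, le_div_iff₀ (by positivity)]
    nlinarith [pi_lt_four]
  have hintegral : ∫ x in (-b)..b, √(p₀ x) = √(α / π) * (2 * arsinh t) := by
    simp_rw [hp₀, sqrt_cauchy_density hα, intervalIntegral.integral_const_mul,
      integral_inv_sqrt_sq_add_sq hα, neg_div, arsinh_neg, hbt]
    ring
  have harsinh : arsinh t ≤ log (2 * exp 1 / (π * σ)) := by
    rw [show 2 * exp 1 / (π * σ) = exp 1 * t by ring]
    exact arsinh_le_log_exp_one_mul ht1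
  have harsinh0 : 0 ≤ arsinh t := arsinh_nonneg_iff.2 (by linarith)
  calc (∫ x in (-b)..b, √(p₀ x)) ^ 2 = 4 * α / π * arsinh t ^ 2 := by
        rw [hintegral, mul_pow, sq_sqrt (by positivity)]; ring
    _ ≤ 4 * α / π * log (2 * exp 1 / (π * σ)) ^ 2 := by gcongr
end
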